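/- Under assumptions A1–A4 with n_0^{(s)} = n^{(s)} = m fixed (m ≥ 2), the term I₂ = (m/N^{(s)}) (X̄_0 − μ̂_0^{(s)})² converges to 0 in probability as s → ∞. -/

import Mathlib

open MeasureTheory ProbabilityTheory Filter Finset BoundedContinuousFunction
open scoped NNReal Topology

noncomputable section


/-- The sample mean of the first `n` observations of the sequence `x`. -/
def sampleMean (x : ℕ → ℝ) (n : ℕ) : ℝ := (∑ j ∈ Finset.range n, x j) / n

/-- Vector of sample means: population `0` has sample size `n0`, every other population
has sample size `nn`.  `X i j` is the `j`-th observation from population `i`. -/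
def xbarVec (n0 nn : ℕ) (X : ℕ → ℕ → ℝ) (i : ℕ) : ℝ :=
  sampleMean (X i) (if i = 0 then n0 else nn)

/-- Tree-order restricted MLE of the control mean `μ₀`:
`μ̂₀ = min_{I ⊆ {1,…,s}} (n₀ X̄₀ + Σ_{i∈I} n X̄ᵢ) / (n₀ + n |I|)` (the minimum includes `I = ∅`). -/
def treeMLE0 (n0 nn s : ℕ) (xbar : ℕ → ℝ) : ℝ :=
  ((Finset.Icc 1 s).powerset).inf' (Finset.powerset_nonempty _)
    fun I => ((n0 : ℝ) * xbar 0 + ∑ i ∈ I, (nn : ℝ) * xbar i)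
      / ((n0 : ℝ) + (nn : ℝ) * I.card)

/-- Tree-order restricted MLE of the `i`-th treatment mean (`1 ≤ i ≤ s`):
`μ̂ᵢ = max (μ̂₀, X̄ᵢ)`. -/
def treeMLE (n0 nn s : ℕ) (xbar : ℕ → ℝ) (i : ℕ) : ℝ :=
  max (treeMLE0 n0 nn s xbar) (xbar i)

/-- Tree-order restricted MLE of the common variance `σ²`. -/
def sigmaHat (n0 nn s : ℕ) (X : ℕ → ℕ → ℝ) : ℝ :=
  (∑ j ∈ Finset.range n0, (X 0 j - treeMLE0 n0 nn s (xbarVec n0 nn X)) ^ 2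
    + ∑ i ∈ Finset.Icc 1 s, ∑ j ∈ Finset.range nn,
        (X i j - treeMLE n0 nn s (xbarVec n0 nn X) i) ^ 2)
    / ((n0 + s * nn : ℕ) : ℝ)

/-! Since `μ̂₀` is a weighted average of sample means, it lies between `min_{i ≤ s} X̄ᵢ` and
`X̄₀`. Hence `I₂ ≥ ε` forces `X̄₀ - X̄ᵢ ≥ √(ε (s + 1))` for some `1 ≤ i ≤ s`. Each `X̄₀ - X̄ᵢ`
is Gaussian with mean `μ₀ - μᵢ ≤ 0` and variance `2σ²/m`, so by the sub-Gaussian Chernoff bound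
this has probability at most `exp (-m ε (s + 1) / (4σ²))`, and a union bound over the `s`
treatments leaves `s · exp (-c (s + 1)) → 0`. -/

lemma treeMLE0_le_xbar_zero {n0 nn s : ℕ} (hn0 : 0 < n0) (xbar : ℕ → ℝ) :
    treeMLE0 n0 nn s xbar ≤ xbar 0 := by
  refine (Finset.inf'_le _ (Finset.empty_mem_powerset _)).trans_eq ?_
  have : (n0 : ℝ) ≠ 0 := by positivity
  simp [this]

lemma le_treeMLE0 {n0 nn s : ℕ} (hn0 : 0 < n0) {xbar : ℕ → ℝ} {c : ℝ}
    (hc : ∀ i ≤ s, c ≤ xbar i) : c ≤ treeMLE0 n0 nn s xbar := by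
  refine Finset.le_inf' _ _ fun I hI => ?_
  have hIs : ∀ i ∈ I, c ≤ xbar i := fun i hi =>
    hc i (Finset.mem_Icc.1 (Finset.mem_powerset.1 hI hi)).2
  rw [le_div_iff₀ (by positivity)]
  calc c * ((n0 : ℝ) + nn * I.card) = n0 * c + ∑ _i ∈ I, (nn : ℝ) * c := by
        rw [Finset.sum_const, nsmul_eq_mul]; ring
    _ ≤ n0 * xbar 0 + ∑ i ∈ I, (nn : ℝ) * xbar i := by
        gcongr with i hi
        · exact hc 0 (Nat.zero_le _)
        · exact hIs i hi

lemma exists_xbar_le_treeMLE0 {n0 nn s : ℕ} (hn0 : 0 < n0) (xbar : ℕ → ℝ) :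
    ∃ i ≤ s, xbar i ≤ treeMLE0 n0 nn s xbar := by
  obtain ⟨i, hi, hmin⟩ := Finset.exists_min_image (Finset.range (s + 1)) xbar
    ⟨0, Finset.mem_range.2 s.succ_pos⟩
  exact ⟨i, Nat.lt_succ_iff.1 (Finset.mem_range.1 hi),
    le_treeMLE0 hn0 fun j hj => hmin j (Finset.mem_range.2 (Nat.lt_succ_of_le hj))⟩

lemma exists_le_xbar_zero_sub_of_le_sub_treeMLE0 {n0 nn s : ℕ} (hn0 : 0 < n0)
    {xbar : ℕ → ℝ} {t : ℝ} (ht : 0 < t) (h : t ≤ xbar 0 - treeMLE0 n0 nn s xbar) :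
    ∃ i ∈ Finset.Icc 1 s, t ≤ xbar 0 - xbar i := by
  obtain ⟨i, his, hi⟩ := exists_xbar_le_treeMLE0 (nn := nn) (s := s) hn0 xbar
  have hti : t ≤ xbar 0 - xbar i := by linarith
  have hi0 : i ≠ 0 := by rintro rfl; linarith
  exact ⟨i, Finset.mem_Icc.2 ⟨Nat.one_le_iff_ne_zero.2 hi0, his⟩, hti⟩

lemma xbarVec_self (n : ℕ) (x : ℕ → ℕ → ℝ) : xbarVec n n x = fun i => sampleMean (x i) n := by
  funext i
  simp only [xbarVec, ite_self]

lemma sampleMean_sub_sampleMean_sub_eq_sum (x : ℕ → ℕ → ℝ) (a : ℕ → ℝ) {k i m : ℕ}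
    (hki : k ≠ i) (hm : m ≠ 0) :
    sampleMean (x k) m - sampleMean (x i) m - (a k - a i)
      = ∑ p ∈ ({k, i} : Finset ℕ) ×ˢ Finset.range m,
          (if p.1 = k then (m : ℝ)⁻¹ else -(m : ℝ)⁻¹) * (x p.1 p.2 - a p.1) := by
  rw [Finset.sum_product, Finset.sum_pair hki]
  simp only [if_true, hki.symm, if_false, ← Finset.mul_sum, Finset.sum_sub_distrib,
    Finset.sum_const, Finset.card_range, nsmul_eq_mul, sampleMean]
  field_simp
  ring

def I2 (m s : ℕ) (x : ℕ → ℕ → ℝ) : ℝ :=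
  (m : ℝ) / ((m : ℝ) * ((s : ℝ) + 1)) * (sampleMean (x 0) m - treeMLE0 m m s (xbarVec m m x)) ^ 2

lemma exists_sqrt_le_sampleMean_sub_of_le_abs_I2 {m s : ℕ} (hm : 0 < m) {ε : ℝ} (hε : 0 < ε)
    {x : ℕ → ℕ → ℝ} (h : ε ≤ |I2 m s x|) :
    ∃ i ∈ Finset.Icc 1 s, √(ε * (s + 1)) ≤ sampleMean (x 0) m - sampleMean (x i) m := by
  set xbar : ℕ → ℝ := fun i => sampleMean (x i) m
  have hd : 0 ≤ xbar 0 - treeMLE0 m m s xbar := sub_nonneg.2 (treeMLE0_le_xbar_zero hm xbar)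
  have hI2 : I2 m s x = (xbar 0 - treeMLE0 m m s xbar) ^ 2 / (s + 1) := by
    rw [I2, xbarVec_self]
    field_simp
    rfl
  rw [hI2, abs_of_nonneg (by positivity), le_div_iff₀ (by positivity)] at h
  exact exists_le_xbar_zero_sub_of_le_sub_treeMLE0 hm (by positivity)
    ((Real.sqrt_le_left hd).2 h)

lemma tendsto_natCast_mul_exp_neg_mul_add_one {K : ℝ} (hK : 0 < K) :
    Tendsto (fun s : ℕ => s * Real.exp (-K * (s + 1))) atTop (𝓝 0) := by
  have h := (tendsto_rpow_mul_exp_neg_mul_atTop_nhds_zero 1 K hK).comp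
    (tendsto_atTop_add_const_right _ 1 tendsto_natCast_atTop_atTop)
  refine squeeze_zero (fun s => by positivity) (fun s => ?_) h
  simp only [Function.comp, Real.rpow_one]
  gcongr
  linarith

section

variable {Ω ι : Type*} [MeasurableSpace Ω] {P : Measure Ω}

lemma hasSubgaussianMGF_id_gaussianReal_zero (v : ℝ≥0) :
    HasSubgaussianMGF id v (gaussianReal 0 v) :=
  ⟨integrable_exp_mul_gaussianReal, fun t => by simp [mgf_id_gaussianReal]⟩

lemma ProbabilityTheory.HasLaw.hasSubgaussianMGF_sub {X : Ω → ℝ} {μ : ℝ} {v : ℝ≥0}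
    (hX : HasLaw X (gaussianReal μ v) P) : HasSubgaussianMGF (fun ω => X ω - μ) v P := by
  have hc := gaussianReal_sub_const hX μ
  rw [sub_self] at hc
  rw [← HasSubgaussianMGF.id_map_iff hc.aemeasurable, hc.map_eq]
  exact hasSubgaussianMGF_id_gaussianReal_zero v

lemma measureReal_le_sum_mul_sub_le_of_gaussianReal {X : ι → Ω → ℝ} {μ : ι → ℝ} {v : ℝ≥0}
    (hindep : iIndepFun X P) (hX : ∀ p, HasLaw (X p) (gaussianReal (μ p) v) P)
    (a : ι → ℝ) (S : Finset ι) {t : ℝ} (ht : 0 ≤ t) :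
    P.real {ω | t ≤ ∑ p ∈ S, a p * (X p ω - μ p)}
      ≤ Real.exp (-t ^ 2 / (2 * v * ∑ p ∈ S, a p ^ 2)) := by
  have hindep' : iIndepFun (fun p ω => a p * (X p ω - μ p)) P :=
    hindep.comp (fun p x => a p * (x - μ p)) fun p => by fun_prop
  refine (HasSubgaussianMGF.measure_sum_ge_le_of_iIndepFun hindep'
    (fun p _ => ((hX p).hasSubgaussianMGF_sub).const_mul (a p)) ht).trans_eq ?_
  rw [NNReal.coe_sum, mul_assoc, Finset.mul_sum, Finset.mul_sum, Finset.mul_sum]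
  refine congrArg (fun x => Real.exp (-t ^ 2 / x)) (Finset.sum_congr rfl fun p _ => ?_)
  exact congrArg (2 * ·) (mul_comm _ _)

lemma measureReal_le_sampleMean_sub_sampleMean_le {X : ℕ → ℕ → Ω → ℝ} {μ : ℕ → ℝ} {v : ℝ≥0}
    (hindep : iIndepFun (fun p : ℕ × ℕ => X p.1 p.2) P)
    (hX : ∀ i j, HasLaw (X i j) (gaussianReal (μ i) v) P) {k i m : ℕ} (hki : k ≠ i)
    (hm : m ≠ 0) {t : ℝ} (ht : 0 ≤ t) :
    P.real {ω | t ≤ sampleMean (fun j => X k j ω) m - sampleMean (fun j => X i j ω) m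
        - (μ k - μ i)} ≤ Real.exp (-m * t ^ 2 / (4 * v)) := by
  have hset : {ω | t ≤ sampleMean (fun j => X k j ω) m - sampleMean (fun j => X i j ω) m
      - (μ k - μ i)} = {ω | t ≤ ∑ p ∈ ({k, i} : Finset ℕ) ×ˢ Finset.range m,
          (if p.1 = k then (m : ℝ)⁻¹ else -(m : ℝ)⁻¹) * (X p.1 p.2 ω - μ p.1)} := by
    ext ω
    rw [Set.mem_ofPred_eq, sampleMean_sub_sampleMean_sub_eq_sum (fun i j => X i j ω) μ hki hm]
    rfl
  rw [hset]
  refine (measureReal_le_sum_mul_sub_le_of_gaussianReal hindep (fun p => hX p.1 p.2) _ _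
    ht).trans_eq ?_
  have hsq : ∀ p : ℕ × ℕ, (if p.1 = k then (m : ℝ)⁻¹ else -(m : ℝ)⁻¹) ^ 2 = (m : ℝ)⁻¹ ^ 2 := by
    intro p; split_ifs <;> simp
  have hm' : (m : ℝ) ≠ 0 := by exact_mod_cast hm
  simp only [hsq, Finset.sum_const, Finset.card_product, Finset.card_pair hki, Finset.card_range,
    nsmul_eq_mul]
  rw [show 2 * (v : ℝ) * ((2 * m : ℕ) * (m : ℝ)⁻¹ ^ 2) = 4 * v / m by push_cast; field_simp; ring,
    div_div_eq_mul_div]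
  ring_nf

variable [IsFiniteMeasure P]

lemma measureReal_le_abs_I2_le {X : ℕ → ℕ → Ω → ℝ} {μ : ℕ → ℝ} {v : ℝ≥0}
    (hindep : iIndepFun (fun p : ℕ × ℕ => X p.1 p.2) P)
    (hX : ∀ i j, HasLaw (X i j) (gaussianReal (μ i) v) P) (hμ : ∀ i, 1 ≤ i → μ 0 ≤ μ i)
    {m : ℕ} (hm : 0 < m) {ε : ℝ} (hε : 0 < ε) (s : ℕ) :
    P.real {ω | ε ≤ |I2 m s fun i j => X i j ω|}
      ≤ s * Real.exp (-(m * ε / (4 * v)) * (s + 1)) := by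
  set t := √(ε * (s + 1))
  set E : ℕ → Set Ω := fun i =>
    {ω | t ≤ sampleMean (fun j => X 0 j ω) m - sampleMean (fun j => X i j ω) m - (μ 0 - μ i)}
  have hsub : {ω | ε ≤ |I2 m s fun i j => X i j ω|} ⊆ ⋃ i ∈ Icc 1 s, E i := by
    intro ω hω
    obtain ⟨i, hi, hti⟩ := exists_sqrt_le_sampleMean_sub_of_le_abs_I2 hm hε hω
    have := hμ i (mem_Icc.1 hi).1
    exact Set.mem_biUnion hi (by simp only [E, Set.mem_ofPred_eq]; linarith)
  have htail : ∀ i ∈ Icc 1 s, P.real (E i) ≤ Real.exp (-(m * ε / (4 * v)) * (s + 1)) := by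
    intro i hi
    have hi0 : 0 ≠ i := (Nat.one_le_iff_ne_zero.1 (mem_Icc.1 hi).1).symm
    refine (measureReal_le_sampleMean_sub_sampleMean_le hindep hX hi0 hm.ne'
      (by positivity)).trans_eq ?_
    rw [Real.sq_sqrt (by positivity)]
    ring_nf
  calc P.real {ω | ε ≤ |I2 m s fun i j => X i j ω|}
      ≤ ∑ i ∈ Icc 1 s, P.real (E i) :=
        (measureReal_mono hsub (measure_ne_top _ _)).trans (measureReal_biUnion_finset_le _ _)
    _ ≤ ∑ _i ∈ Icc 1 s, Real.exp (-(m * ε / (4 * v)) * (s + 1)) := sum_le_sum htail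
    _ = s * Real.exp (-(m * ε / (4 * v)) * (s + 1)) := by simp

end

theorem I2_tendsto_zero_in_probability_general
    {Ω : Type*} [MeasurableSpace Ω] (P : Measure Ω) [IsProbabilityMeasure P]
    (μ : ℕ → ℝ) (v : ℝ≥0) (hv : v ≠ 0)
    (m : ℕ) (hm : 2 ≤ m)
    -- A1: tree order restriction
    (hA1 : ∀ i, 1 ≤ i → μ 0 ≤ μ i)
    -- A3: independent normal observations, common variance v
    (X : ℕ → ℕ → Ω → ℝ)
    (hmeas : ∀ i j, Measurable (X i j))
    (hindep : iIndepFun (fun p : ℕ × ℕ => X p.1 p.2) P)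
    (hdist : ∀ i j, Measure.map (X i j) P = gaussianReal (μ i) v)
    :
    ∀ ε : ℝ, 0 < ε →
      Tendsto (fun s : ℕ =>
          P {ω | ε ≤ |(m : ℝ) / ((m : ℝ) * ((s : ℝ) + 1)) *
              (sampleMean (fun j => X 0 j ω) m
                - treeMLE0 m m s (xbarVec m m fun i j => X i j ω)) ^ 2|})
        atTop (𝓝 0) := by
  intro ε hε
  have hm0 : 0 < m := by omega
  have hv0 : (0 : ℝ) < v := NNReal.coe_pos.2 (pos_iff_ne_zero.2 hv)
  have hX : ∀ i j, HasLaw (X i j) (gaussianReal (μ i) v) P :=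
    fun i j => ⟨(hmeas i j).aemeasurable, hdist i j⟩
  have hreal : Tendsto (fun s : ℕ => P.real {ω | ε ≤ |I2 m s fun i j => X i j ω|}) atTop (𝓝 0) :=
    squeeze_zero (fun _ => measureReal_nonneg) (measureReal_le_abs_I2_le hindep hX hA1 hm0 hε)
      (tendsto_natCast_mul_exp_neg_mul_add_one (by positivity))
  have hennreal := ENNReal.tendsto_ofReal hreal
  rw [ENNReal.ofReal_zero] at hennreal
  exact hennreal.congr fun s => ofReal_measureReal (measure_ne_top _ _)

/-- Under A1–A4 with all sample sizes equal to a fixed `m ≥ 2`, the term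
`I₂ = (m/N⁽ˢ⁾)(X̄₀ − μ̂₀⁽ˢ⁾)²` (with `N⁽ˢ⁾ = m(s+1)`) converges to `0` in probability. -/
theorem I2_tendsto_zero_in_probability
    {Ω : Type*} [MeasurableSpace Ω] (P : Measure Ω) [IsProbabilityMeasure P]
    (μ : ℕ → ℝ) (v : ℝ≥0) (hv : v ≠ 0)
    (m : ℕ) (hm : 2 ≤ m)
    -- A1: tree order restriction
    (hA1 : ∀ i, 1 ≤ i → μ 0 ≤ μ i)
    -- A2: uniformly bounded means
    (hA2 : ∃ B > 0, ∀ i, μ i ≤ B)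
    -- A3: independent normal observations, common variance v
    (X : ℕ → ℕ → Ω → ℝ)
    (hmeas : ∀ i j, Measurable (X i j))
    (hindep : iIndepFun (fun p : ℕ × ℕ => X p.1 p.2) P)
    (hdist : ∀ i j, Measure.map (X i j) P = gaussianReal (μ i) v)
    :
    ∀ ε : ℝ, 0 < ε →
      Tendsto (fun s : ℕ =>
          P {ω | ε ≤ |(m : ℝ) / ((m : ℝ) * ((s : ℝ) + 1)) *
              (sampleMean (fun j => X 0 j ω) m
                - treeMLE0 m m s (xbarVec m m fun i j => X i j ω)) ^ 2|})
        atTop (𝓝 0) :=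
  I2_tendsto_zero_in_probability_general P μ v hv m hm hA1 X hmeas hindep hdist
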